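/- Let c_1, ..., c_n : ℕ → ℝ be nondecreasing functions with c_i(0) = 0 and lim_{k→∞} c_i(k)^2/k = 4 V_i with V_i > 0 for each i. Define C(k) = max over (k_1,...,k_n) with k_1+...+k_n = k of the sum c_1(k_1)+...+c_n(k_n). Then lim_{k→∞} C(k)^2/k = 4(V_1+...+V_n). -/

import Mathlib

open Filter Topology Finset

/-! The rescaled capacities `c i m / √m` converge to `s i = 2 √(V i)`. Splitting `k` in the
proportions `a i = s i ^ 2 / ∑ j, s j ^ 2` gives `C k / √k ≳ ∑ i, s i √(a i) = √(∑ i, s i ^ 2)`.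
Conversely `c i m ≤ λ s i √m + O(1)` for any `λ > 1`, and Cauchy–Schwarz bounds
`∑ i, λ s i √(f i)` by `λ √(∑ i, s i ^ 2) √k` whenever `∑ i, f i = k`. -/

def allocationSums {ι : Type*} [Fintype ι] (c : ι → ℕ → ℝ) (k : ℕ) : Set ℝ :=
  {s : ℝ | ∃ f : ι → ℕ, (∑ i, f i) = k ∧ s = ∑ i, c i (f i)}

theorem tendsto_div_sqrt_of_tendsto_sq_div {c : ℕ → ℝ} {L : ℝ} (hc : ∀ m, 0 ≤ c m)
    (h : Tendsto (fun m : ℕ => c m ^ 2 / m) atTop (𝓝 L)) :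
    Tendsto (fun m : ℕ => c m / √m) atTop (𝓝 √L) :=
  ((Real.continuous_sqrt.tendsto L).comp h).congr fun m => by
    rw [Function.comp_apply, Real.sqrt_div (sq_nonneg _), Real.sqrt_sq (hc m)]

theorem tendsto_sq_div_of_tendsto_div_sqrt {C : ℕ → ℝ} {s : ℝ}
    (h : Tendsto (fun k : ℕ => C k / √k) atTop (𝓝 s)) :
    Tendsto (fun k : ℕ => C k ^ 2 / k) atTop (𝓝 (s ^ 2)) :=
  (h.pow 2).congr fun k => by rw [div_pow, Real.sq_sqrt k.cast_nonneg]

theorem tendsto_comp_floor_mul_div_sqrt {c : ℕ → ℝ} {s a : ℝ} (ha : 0 < a)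
    (h : Tendsto (fun m : ℕ => c m / √m) atTop (𝓝 s)) :
    Tendsto (fun k : ℕ => c ⌊a * k⌋₊ / √k) atTop (𝓝 (s * √a)) := by
  have hfloor : Tendsto (fun k : ℕ => ⌊a * k⌋₊) atTop atTop := tendsto_nat_floor_mul_atTop a ha
  have hratio : Tendsto (fun k : ℕ => √((⌊a * k⌋₊ : ℝ) / k)) atTop (𝓝 √a) :=
    (Real.continuous_sqrt.tendsto a).comp
      ((tendsto_nat_floor_mul_div_atTop ha.le).comp tendsto_natCast_atTop_atTop)
  refine ((h.comp hfloor).mul hratio).congr' ?_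
  filter_upwards [hfloor.eventually_gt_atTop 0] with k hk
  have : (0 : ℝ) < √(⌊a * k⌋₊ : ℝ) := Real.sqrt_pos.2 (by exact_mod_cast hk)
  rw [Function.comp_apply, Real.sqrt_div' _ k.cast_nonneg]
  field_simp

theorem sum_floor_mul_le {ι : Type*} [Fintype ι] {a : ι → ℝ} (ha : ∀ i, 0 ≤ a i)
    (ha1 : ∑ i, a i = 1) (k : ℕ) : ∑ i, ⌊a i * k⌋₊ ≤ k := by
  have : ∑ i, (⌊a i * k⌋₊ : ℝ) ≤ k :=
    calc ∑ i, (⌊a i * k⌋₊ : ℝ) ≤ ∑ i, a i * k :=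
          sum_le_sum fun i _ => Nat.floor_le (mul_nonneg (ha i) k.cast_nonneg)
      _ = k := by rw [← sum_mul, ha1, one_mul]
  exact_mod_cast this

theorem exists_le_mul_sqrt_add {c : ℕ → ℝ} (hmono : Monotone c) (hc : ∀ m, 0 ≤ c m)
    {t : ℝ} (ht : 0 ≤ t) (h : ∀ᶠ m in atTop, c m / √m < t) :
    ∃ M, ∀ m, c m ≤ t * √m + M := by
  obtain ⟨N, hN⟩ := eventually_atTop.1 h
  refine ⟨c N, fun m => ?_⟩
  have htm : 0 ≤ t * √m := by positivity
  rcases lt_or_ge m N with hmN | hNm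
  · linarith [hmono hmN.le]
  rcases Nat.eq_zero_or_pos m with rfl | hm
  · obtain rfl : N = 0 := Nat.le_zero.1 hNm
    linarith
  · have : c m < t * √m := (div_lt_iff₀ (Real.sqrt_pos.2 (by exact_mod_cast hm))).1 (hN m hNm)
    linarith [hc N]

section Allocation

variable {ι : Type*} [Fintype ι] {c : ι → ℕ → ℝ}

-- Put the missing `k - ∑ i, f i` units into an arbitrary part.
theorem sum_le_of_isGreatest_allocationSums [Nonempty ι] (hmono : ∀ i, Monotone (c i))
    {k : ℕ} {C : ℝ} (hC : IsGreatest (allocationSums c k) C) {f : ι → ℕ}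
    (hf : ∑ i, f i ≤ k) : ∑ i, c i (f i) ≤ C := by
  classical
  let g := f + Pi.single (Classical.arbitrary ι) (k - ∑ i, f i)
  have hg : ∑ i, g i = k := by
    simp only [g, Pi.add_apply, sum_add_distrib, sum_pi_single', mem_univ, if_true]
    omega
  calc ∑ i, c i (f i) ≤ ∑ i, c i (g i) :=
        sum_le_sum fun i _ => hmono i (Nat.le_add_right _ _)
    _ ≤ C := hC.2 ⟨g, hg, rfl⟩

theorem sum_le_sqrt_mul_sqrt_add {t M : ι → ℝ} (hc : ∀ i m, c i m ≤ t i * √m + M i)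
    (f : ι → ℕ) : ∑ i, c i (f i) ≤ √(∑ i, t i ^ 2) * √(∑ i, f i : ℝ) + ∑ i, M i :=
  calc ∑ i, c i (f i) ≤ ∑ i, (t i * √(f i) + M i) := sum_le_sum fun i _ => hc i (f i)
    _ = ∑ i, t i * √(f i) + ∑ i, M i := sum_add_distrib
    _ ≤ √(∑ i, t i ^ 2) * √(∑ i, f i : ℝ) + ∑ i, M i := by
      gcongr
      simpa only [Real.sq_sqrt (Nat.cast_nonneg _)] using
        Real.sum_mul_le_sqrt_mul_sqrt univ t fun i => √(f i)

variable {s : ι → ℝ} {C : ℕ → ℝ}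

theorem tendsto_sum_comp_floor_div_sqrt [Nonempty ι] (hs : ∀ i, 0 < s i)
    (hlim : ∀ i, Tendsto (fun m : ℕ => c i m / √m) atTop (𝓝 (s i))) :
    Tendsto (fun k : ℕ => ∑ i, c i ⌊s i ^ 2 / (∑ j, s j ^ 2) * k⌋₊ / √k) atTop
      (𝓝 √(∑ i, s i ^ 2)) := by
  set T := ∑ j, s j ^ 2
  have hT : 0 < T := sum_pos (fun j _ => pow_pos (hs j) 2) univ_nonempty
  have hlimit : ∑ i, s i * √(s i ^ 2 / T) = √T :=
    calc ∑ i, s i * √(s i ^ 2 / T) = ∑ i, s i ^ 2 / √T := sum_congr rfl fun i _ => by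
          rw [Real.sqrt_div' _ hT.le, Real.sqrt_sq (hs i).le]; ring
      _ = √T := by rw [← sum_div, Real.div_sqrt]
  rw [← hlimit]
  exact tendsto_finsetSum univ fun i _ =>
    tendsto_comp_floor_mul_div_sqrt (div_pos (pow_pos (hs i) 2) hT) (hlim i)

theorem tendsto_div_sqrt_of_isGreatest_allocationSums [Nonempty ι]
    (hmono : ∀ i, Monotone (c i)) (hc : ∀ i m, 0 ≤ c i m) (hs : ∀ i, 0 < s i)
    (hlim : ∀ i, Tendsto (fun m : ℕ => c i m / √m) atTop (𝓝 (s i)))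
    (hC : ∀ k, IsGreatest (allocationSums c k) (C k)) :
    Tendsto (fun k : ℕ => C k / √k) atTop (𝓝 √(∑ i, s i ^ 2)) := by
  have hT : 0 < ∑ i, s i ^ 2 := sum_pos (fun j _ => pow_pos (hs j) 2) univ_nonempty
  set S := √(∑ i, s i ^ 2)
  have hS : 0 < S := Real.sqrt_pos.2 hT
  refine tendsto_order.2 ⟨fun b hb => ?_, fun b hb => ?_⟩
  · filter_upwards [(tendsto_sum_comp_floor_div_sqrt hs hlim).eventually (eventually_gt_nhds hb)]
      with k hk
    refine hk.trans_le ?_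
    rw [← sum_div]
    refine div_le_div_of_nonneg_right (sum_le_of_isGreatest_allocationSums hmono (hC k) ?_)
      (Real.sqrt_nonneg _)
    exact sum_floor_mul_le (fun i => by positivity) (by rw [← sum_div, div_self hT.ne']) k
  · obtain ⟨b', hSb', hb'b⟩ := exists_between hb
    -- Scaling every `s i` by `b' / S > 1` makes the Cauchy–Schwarz constant exactly `b'`.
    have hscale : 0 < b' / S := div_pos (hS.trans hSb') hS
    have ht : √(∑ i, (b' / S * s i) ^ 2) = b' := by
      simp_rw [mul_pow, ← mul_sum, Real.sqrt_mul (sq_nonneg _), Real.sqrt_sq hscale.le]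
      exact div_mul_cancel₀ _ hS.ne'
    choose M hM using fun i => exists_le_mul_sqrt_add (hmono i) (hc i)
      (mul_nonneg hscale.le (hs i).le)
      ((hlim i).eventually (eventually_lt_nhds
        (lt_mul_left (hs i) ((one_lt_div hS).2 hSb'))))
    have hMk : Tendsto (fun k : ℕ => (∑ i, M i) / √k) atTop (𝓝 0) :=
      tendsto_const_nhds.div_atTop (Real.tendsto_sqrt_atTop.comp tendsto_natCast_atTop_atTop)
    filter_upwards [hMk.eventually (eventually_lt_nhds (sub_pos.2 hb'b)),
      eventually_gt_atTop 0] with k hk hk0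
    obtain ⟨f, hf, hCk⟩ := (hC k).1
    have hsqrt : 0 < √(k : ℝ) := Real.sqrt_pos.2 (by exact_mod_cast hk0)
    have hbound := sum_le_sqrt_mul_sqrt_add hM f
    rw [ht, ← Nat.cast_sum, hf, ← hCk] at hbound
    calc C k / √k ≤ (b' * √k + ∑ i, M i) / √k := by gcongr
      _ = b' + (∑ i, M i) / √k := by field_simp
      _ < b := by linarith

end Allocation

theorem ech_disjoint_union_weyl (n : ℕ) (hn : 0 < n) (c : Fin n → ℕ → ℝ)
    (hmono : ∀ i, Monotone (c i)) (h0 : ∀ i, c i 0 = 0)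
    (V : Fin n → ℝ) (hV : ∀ i, 0 < V i)
    (hlim : ∀ i, Tendsto (fun k : ℕ => (c i k) ^ 2 / (k : ℝ)) atTop (nhds (4 * V i)))
    (C : ℕ → ℝ)
    (hC : ∀ k : ℕ, IsGreatest
      {s : ℝ | ∃ f : Fin n → ℕ, (∑ i, f i) = k ∧ s = ∑ i, c i (f i)} (C k)) :
    Tendsto (fun k : ℕ => (C k) ^ 2 / (k : ℝ)) atTop (nhds (4 * ∑ i, V i)) := by
  have : Nonempty (Fin n) := ⟨⟨0, hn⟩⟩
  have hc : ∀ i m, 0 ≤ c i m := fun i m => h0 i ▸ hmono i m.zero_le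
  have hnorm := tendsto_div_sqrt_of_isGreatest_allocationSums hmono hc
    (fun i => Real.sqrt_pos.2 (by linarith [hV i]))
    (fun i => tendsto_div_sqrt_of_tendsto_sq_div (hc i) (hlim i)) hC
  have hlimit : √(∑ i, √(4 * V i) ^ 2) ^ 2 = 4 * ∑ i, V i := by
    have hV4 : ∀ i, 0 ≤ 4 * V i := fun i => by linarith [hV i]
    simp_rw [Real.sq_sqrt (hV4 _), Real.sq_sqrt (sum_nonneg fun i _ => hV4 i), mul_sum]
  simpa only [hlimit] using tendsto_sq_div_of_tendsto_div_sqrt hnorm
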